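/- Let x ∈ 𝔹 and let d be a Newton direction at x. Then ⟪A x^{m-1}, d⟫ = −⟪d, F′(x) d⟫ (the directional derivative of φ along d equals minus the quadratic form of F′(x) at d). -/

import Mathlib

open scoped RealInnerProductSpace

noncomputable section

/-- Euclidean space `ℝ^n`. -/
abbrev Euc (n : ℕ) : Type := EuclideanSpace ℝ (Fin n)

/-- An `m`-th order tensor on `ℝ^n`, viewed as a continuous `m`-multilinear form. -/
abbrev Tensor (m n : ℕ) : Type := ContinuousMultilinearMap ℝ (fun _ : Fin m => Euc n) ℝ

/-- A tensor is symmetric if it is invariant under every permutation of its arguments. -/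
def IsSymmTensor {m n : ℕ} (A : Tensor m n) : Prop :=
  ∀ (e : Equiv.Perm (Fin m)) (v : Fin m → Euc n), A (v ∘ e) = A v

/-- `A x^m`, the homogeneous form `A (x, …, x)`. -/
def tpow {m n : ℕ} (A : Tensor m n) (x : Euc n) : ℝ := A (fun _ => x)

/-- The last index of `Fin m`. -/
def lastIdx {m : ℕ} (_hm : 2 ≤ m) : Fin m := ⟨m - 1, by omega⟩

/-- The second to last index of `Fin m`. -/
def sndIdx {m : ℕ} (_hm : 2 ≤ m) : Fin m := ⟨m - 2, by omega⟩

lemma sndIdx_ne_lastIdx {m : ℕ} (hm : 2 ≤ m) : sndIdx hm ≠ lastIdx hm := by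
  simp only [sndIdx, lastIdx, Fin.mk.injEq, ne_eq]
  omega

/-- `A x^{m-1}`: the unique vector with `⟪A x^{m-1}, v⟫ = A (x, …, x, v)` for all `v`. -/
def tvec {m n : ℕ} (A : Tensor m n) (hm : 2 ≤ m) (x : Euc n) : Euc n :=
  (InnerProductSpace.toDual ℝ (Euc n)).symm
    (A.toContinuousLinearMap (fun _ => x) (lastIdx hm))

/-- `F(x) = A x^{m-1} - (A x^m) • x`. -/
def Fvec {m n : ℕ} (A : Tensor m n) (hm : 2 ≤ m) (x : Euc n) : Euc n :=
  tvec A hm x - tpow A x • x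

/-- `φ(x) = (1/m) A x^m`. -/
def phi {m n : ℕ} (A : Tensor m n) (x : Euc n) : ℝ := (1 / (m : ℝ)) * tpow A x

/-- Orthogonal projection `P_x d = d - ⟪x, d⟫ x` (for `x` a unit vector). -/
def Pproj {n : ℕ} (x d : Euc n) : Euc n := d - ⟪x, d⟫ • x

/-- `x(α) = (x + α d)/‖x + α d‖`, the projection of `x + α d` onto the unit sphere. -/
def xcur {n : ℕ} (x d : Euc n) (α : ℝ) : Euc n := ‖x + α • d‖⁻¹ • (x + α • d)

/-- `w(x, d)`: the unique vector with `⟪w(x, d), v⟫ = A (x, …, x, d, v)` for all `v`. -/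
def wvec {m n : ℕ} (A : Tensor m n) (hm : 2 ≤ m) (x d : Euc n) : Euc n :=
  (InnerProductSpace.toDual ℝ (Euc n)).symm
    (A.toContinuousLinearMap (Function.update (fun _ => x) (sndIdx hm) d) (lastIdx hm))

/-- `A (x, …, x, d, d)`. -/
def A2 {m n : ℕ} (A : Tensor m n) (hm : 2 ≤ m) (x d : Euc n) : ℝ :=
  A (Function.update (Function.update (fun _ => x) (sndIdx hm) d) (lastIdx hm) d)

lemma wvec_add {m n : ℕ} (A : Tensor m n) (hm : 2 ≤ m) (x d₁ d₂ : Euc n) :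
    wvec A hm x (d₁ + d₂) = wvec A hm x d₁ + wvec A hm x d₂ := by
  unfold wvec
  rw [← map_add]
  congr 1
  ext v
  simp only [ContinuousMultilinearMap.toContinuousLinearMap_apply, ContinuousLinearMap.add_apply]
  rw [Function.update_comm (sndIdx_ne_lastIdx hm), Function.update_comm (sndIdx_ne_lastIdx hm),
    Function.update_comm (sndIdx_ne_lastIdx hm)]
  exact A.map_update_add _ _ _ _

lemma wvec_smul {m n : ℕ} (A : Tensor m n) (hm : 2 ≤ m) (x : Euc n) (c : ℝ) (d : Euc n) :
    wvec A hm x (c • d) = c • wvec A hm x d := by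
  unfold wvec
  rw [← map_smul]
  congr 1
  ext v
  simp only [ContinuousMultilinearMap.toContinuousLinearMap_apply,
    ContinuousLinearMap.smul_apply, smul_eq_mul]
  rw [Function.update_comm (sndIdx_ne_lastIdx hm), Function.update_comm (sndIdx_ne_lastIdx hm)]
  exact A.map_update_smul _ _ _ _

/-- The Jacobian `F'(x) d = (m-1) w(x,d) - (A x^m) d - m ⟪A x^{m-1}, d⟫ x`. -/
def FderivL {m n : ℕ} (A : Tensor m n) (hm : 2 ≤ m) (x : Euc n) : Euc n →L[ℝ] Euc n :=
  LinearMap.toContinuousLinearMap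
  { toFun := fun d =>
      ((m : ℝ) - 1) • wvec A hm x d - tpow A x • d - ((m : ℝ) * ⟪tvec A hm x, d⟫) • x
    map_add' := by
      intro d₁ d₂
      rw [wvec_add, inner_add_right]
      module
    map_smul' := by
      intro c d
      simp only [RingHom.id_apply]
      rw [wvec_smul, inner_smul_right]
      module }

/-- A Newton direction at `x`: `⟪x, d⟫ = 0` and `P_x (F'(x) d + F(x)) = 0`. -/
def NewtonDir {m n : ℕ} (A : Tensor m n) (hm : 2 ≤ m) (x d : Euc n) : Prop :=
  ⟪x, d⟫ = 0 ∧ Pproj x (FderivL A hm x d + Fvec A hm x) = 0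

/-- The residual function `θ(x) = (1/2)‖F(x)‖²`. -/
def theta {m n : ℕ} (A : Tensor m n) (hm : 2 ≤ m) (x : Euc n) : ℝ :=
  (1 / 2) * ‖Fvec A hm x‖ ^ 2

/-- Assumption (A): second-order sufficient condition at the KKT point `x̄`. -/
def AssumpA {m n : ℕ} (A : Tensor m n) (hm : 2 ≤ m) (xb : Euc n) (lam : ℝ) : Prop :=
  ‖xb‖ = 1 ∧ tvec A hm xb = lam • xb ∧ lam = tpow A xb ∧
    ∀ d : Euc n, d ≠ 0 → ⟪xb, d⟫ = 0 →
      0 < ((m : ℝ) - 1) * A2 A hm xb d - lam * ‖d‖ ^ 2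

end

theorem inner_Pproj_eq_of_inner_eq_zero {n : ℕ} {x d : Euc n} (h : ⟪x, d⟫ = 0) (v : Euc n) :
    ⟪d, Pproj x v⟫ = ⟪d, v⟫ := by
  rw [Pproj, inner_sub_right, real_inner_smul_right, real_inner_comm x d, h, mul_zero, sub_zero]

theorem inner_Fvec_eq_of_inner_eq_zero {m n : ℕ} (A : Tensor m n) (hm : 2 ≤ m) {x d : Euc n}
    (h : ⟪x, d⟫ = 0) : ⟪d, Fvec A hm x⟫ = ⟪tvec A hm x, d⟫ := by
  rw [Fvec, inner_sub_right, real_inner_smul_right, real_inner_comm x d, h, mul_zero, sub_zero,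
    real_inner_comm]

theorem stmt11_general {m n : ℕ} (hm : 2 ≤ m) (A : Tensor m n)
    (x : Euc n) (d : Euc n) (hNd : NewtonDir A hm x d) :
    ⟪tvec A hm x, d⟫ = -⟪d, FderivL A hm x d⟫ := by
  obtain ⟨hxd, hP⟩ := hNd
  have hsum : ⟪d, FderivL A hm x d⟫ + ⟪d, Fvec A hm x⟫ = 0 := by
    rw [← inner_add_right, ← inner_Pproj_eq_of_inner_eq_zero hxd, hP, inner_zero_right]
  rw [inner_Fvec_eq_of_inner_eq_zero A hm hxd] at hsum
  linarith

/-- for a Newton direction `d` at `x`, one has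
`⟪A x^{m-1}, d⟫ = -⟪d, F'(x) d⟫`. -/
theorem stmt11 {m n : ℕ} (hn : 1 ≤ n) (hm : 2 ≤ m) (A : Tensor m n) (hA : IsSymmTensor A)
    (x : Euc n) (hx : ‖x‖ = 1) (d : Euc n) (hNd : NewtonDir A hm x d) :
    ⟪tvec A hm x, d⟫ = -⟪d, FderivL A hm x d⟫ :=
  stmt11_general hm A x d hNd
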